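/- Let M, a, s be positive integers with M > 1 such that ∑_{i=0}^{M-1} (a+i)^2 = s^2, and suppose M = 24·m₁ for a positive integer m₁. Then for every prime p > 3 with p ≢ 1 (mod 12) and p ≢ 11 (mod 12), there do not exist integers i ≥ 0 and q ≥ 1 with p ∤ q such that m₁ = p^(2i+1)·q; equivalently, the exact power of p dividing m₁ is even. -/

import Mathlib

/-!
Put `c = 2a + M - 1`. Summing the squares gives `12 s² = M (3c² + M² - 1)`, so for `M = 24 m₁`
we get `s² = 2 m₁ (3c² + M² - 1)`. If `p > 3` divides `m₁` to an odd power, it must also divide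
`3c² + M² - 1`; as `p ∣ M`, this says `3c² ≡ 1 (mod p)`, whence `3 ≡ (3c)²` is a quadratic
residue mod `p`. By quadratic reciprocity that forces `p ≡ ±1 (mod 12)`.
-/

theorem twelve_mul_sum_range_add_sq (a : ℤ) (n : ℕ) :
    12 * ∑ i ∈ Finset.range n, (a + i) ^ 2 = n * (3 * (2 * a + n - 1) ^ 2 + n ^ 2 - 1) := by
  induction n with
  | zero => simp
  | succ n ih =>
    rw [Finset.sum_range_succ, mul_add, ih]
    push_cast
    ring

theorem Nat.Prime.dvd_of_sq_eq_pow_odd_mul {p s r i : ℕ} (hp : p.Prime)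
    (h : s ^ 2 = p ^ (2 * i + 1) * r) : p ∣ r := by
  rcases eq_or_ne r 0 with rfl | hr
  · exact dvd_zero p
  have hval := congrArg (·.factorization p) h
  simp only [Nat.factorization_pow, Nat.factorization_mul (pow_ne_zero _ hp.ne_zero) hr,
    hp.factorization_self, Finsupp.coe_add, Finsupp.coe_smul, Pi.add_apply, Pi.smul_apply,
    smul_eq_mul, mul_one] at hval
  exact Nat.dvd_of_factorization_pos (by omega)

theorem Int.dvd_of_sq_eq_pow_odd_mul {p i : ℕ} {s r : ℤ} (hp : p.Prime)
    (h : s ^ 2 = (p : ℤ) ^ (2 * i + 1) * r) : (p : ℤ) ∣ r := by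
  have h' := congrArg Int.natAbs h
  simp only [Int.natAbs_pow, Int.natAbs_mul, Int.natAbs_natCast] at h'
  exact Int.natCast_dvd.mpr (hp.dvd_of_sq_eq_pow_odd_mul h')

theorem ZMod.mod_twelve_eq_of_isSquare_three {p : ℕ} [Fact p.Prime] (hp : 3 < p)
    (h : IsSquare (3 : ZMod p)) : p % 12 = 1 ∨ p % 12 = 11 := by
  have hodd : p % 2 = 1 := (Fact.out : p.Prime).mod_two_eq_one_iff_ne_two.mpr (by omega)
  have hp3 : p % 3 ≠ 0 := fun h0 =>
    absurd ((Nat.prime_dvd_prime_iff_eq Nat.prime_three Fact.out).mp (Nat.dvd_of_mod_eq_zero h0))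
      (by omega)
  have hcast : (p : ZMod 3) = ((p % 3 : ℕ) : ZMod 3) := (ZMod.natCast_mod p 3).symm
  rw [show (3 : ZMod p) = ((3 : ℕ) : ZMod p) by norm_cast] at h
  rcases Nat.odd_mod_four_iff.mp hodd with h4 | h4
  · rw [ZMod.exists_sq_eq_prime_iff_of_mod_four_eq_one h4 (by norm_num), hcast] at h
    have hns : ¬IsSquare ((2 : ℕ) : ZMod 3) := by decide
    have : p % 3 ≠ 2 := fun h2 => hns (h2 ▸ h)
    omega
  · rw [ZMod.exists_sq_eq_prime_iff_of_mod_four_eq_three h4 (by norm_num) (by omega), hcast] at h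
    have : p % 3 ≠ 1 := fun h1 => h (h1 ▸ ⟨1, by decide⟩)
    omega

theorem sq_eq_two_mul_of_sum_range_add_sq {M a s m : ℕ}
    (hsum : ∑ i ∈ Finset.range M, (a + i) ^ 2 = s ^ 2) (hM : M = 24 * m) :
    (s : ℤ) ^ 2 = 2 * m * (3 * (2 * a + M - 1) ^ 2 + M ^ 2 - 1) := by
  have h12 := twelve_mul_sum_range_add_sq a M
  have hMZ : (M : ℤ) = 24 * m := by exact_mod_cast hM
  rw [show ∑ i ∈ Finset.range M, ((a : ℤ) + i) ^ 2 = s ^ 2 by exact_mod_cast hsum] at h12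
  refine mul_left_cancel₀ (by norm_num : (12 : ℤ) ≠ 0) ?_
  generalize (2 * a + M - 1 : ℤ) = c at h12 ⊢
  rw [h12, hMZ]
  ring

theorem stmt_general (M a s m₁ : ℕ)
    (hsum : ∑ i ∈ Finset.range M, (a + i) ^ 2 = s ^ 2)
    (hMeq : M = 24 * m₁) :
    ∀ p : ℕ, p.Prime → 3 < p → p % 12 ≠ 1 → p % 12 ≠ 11 →
      ¬ ∃ i q : ℕ, 1 ≤ q ∧ ¬ p ∣ q ∧ m₁ = p ^ (2 * i + 1) * q := by
  rintro p hp hp3 h1 h11 ⟨i, q, -, hpq, rfl⟩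
  have : Fact p.Prime := ⟨hp⟩
  have hsq := sq_eq_two_mul_of_sum_range_add_sq hsum hMeq
  generalize (2 * a + M - 1 : ℤ) = c at hsq
  have hpZ : Prime (p : ℤ) := Nat.prime_iff_prime_int.mp hp
  have hpN : (p : ℤ) ∣ 3 * c ^ 2 + M ^ 2 - 1 := by
    have h2qN := Int.dvd_of_sq_eq_pow_odd_mul (i := i) (r := 2 * q * (3 * c ^ 2 + M ^ 2 - 1)) hp
      (by rw [hsq]; push_cast; ring)
    rcases hpZ.dvd_or_dvd h2qN with h2q | hN
    · rcases hpZ.dvd_or_dvd h2q with h2 | hq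
      · have := Int.le_of_dvd two_pos h2
        omega
      · exact absurd (Int.natCast_dvd_natCast.mp hq) hpq
    · exact hN
  have hM0 : (M : ZMod p) = 0 := by
    rw [ZMod.natCast_eq_zero_iff, hMeq]
    exact dvd_mul_of_dvd_right (dvd_mul_of_dvd_left (dvd_pow_self p (by omega)) q) 24
  have hN0 := (ZMod.intCast_zmod_eq_zero_iff_dvd _ p).mpr hpN
  push_cast [hM0] at hN0
  have hsq3 : IsSquare (3 : ZMod p) := ⟨3 * (c : ZMod p), by linear_combination -3 * hN0⟩
  exact (ZMod.mod_twelve_eq_of_isSquare_three hp3 hsq3).elim h1 h11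

theorem stmt (M a s m₁ : ℕ) (hM : 1 < M) (ha : 1 ≤ a) (hs : 1 ≤ s)
    (hsum : ∑ i ∈ Finset.range M, (a + i) ^ 2 = s ^ 2)
    (hm : 1 ≤ m₁) (hMeq : M = 24 * m₁) :
    ∀ p : ℕ, p.Prime → 3 < p → p % 12 ≠ 1 → p % 12 ≠ 11 →
      ¬ ∃ i q : ℕ, 1 ≤ q ∧ ¬ p ∣ q ∧ m₁ = p ^ (2 * i + 1) * q :=
  stmt_general M a s m₁ hsum hMeq
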